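/- arXiv:math/0501502 — 3 statements merged into one kernel-verified Lean document; each statement's English description precedes it below -/
import Mathlib

section
/- In the orthogonal group O(n) with the partial order induced by reflection length, if α ≤ β then M(α) ⊆ M(β) and F(β) ⊆ F(α), where M and F denote the moved and fixed spaces. -/
noncomputable section
open scoped RealInnerProductSpace

abbrev Euc (n : ℕ) := EuclideanSpace ℝ (Fin n)

/-- The moved space `M(A) = range (A - I)` of an orthogonal transformation. -/
def movedSpace {n : ℕ} (A : Euc n ≃ₗᵢ[ℝ] Euc n) : Submodule ℝ (Euc n) :=
  LinearMap.range (A.toLinearEquiv.toLinearMap - LinearMap.id)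

/-- The fixed space `F(A) = ker (A - I)` of an orthogonal transformation. -/
def fixedSpace {n : ℕ} (A : Euc n ≃ₗᵢ[ℝ] Euc n) : Submodule ℝ (Euc n) :=
  LinearMap.ker (A.toLinearEquiv.toLinearMap - LinearMap.id)

lemma fixedSpace_eq_orthogonal {n : ℕ} (A : Euc n ≃ₗᵢ[ℝ] Euc n) :
    fixedSpace A = (movedSpace A)ᗮ := by
  have hle : fixedSpace A ≤ (movedSpace A)ᗮ := by
    intro x hx
    have hx' : A x = x := by
      have := hx
      simp only [fixedSpace, LinearMap.mem_ker, LinearMap.sub_apply, LinearMap.id_apply,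
        sub_eq_zero] at this
      exact this
    intro u hu
    obtain ⟨z, rfl⟩ := hu
    simp only [LinearMap.sub_apply, LinearMap.id_apply]
    have : ⟪A z - z, x⟫ = ⟪A z, A x⟫ - ⟪z, x⟫ := by
      rw [inner_sub_left, hx']
    rw [show (A.toLinearEquiv.toLinearMap z - z : Euc n) = A z - z from rfl]
    rw [this, A.inner_map_map]
    ring
  have h1 : Module.finrank ℝ (movedSpace A) + Module.finrank ℝ (fixedSpace A)
      = Module.finrank ℝ (Euc n) :=
    LinearMap.finrank_range_add_finrank_ker (A.toLinearEquiv.toLinearMap - LinearMap.id)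
  have h2 : Module.finrank ℝ (movedSpace A) + Module.finrank ℝ ((movedSpace A)ᗮ)
      = Module.finrank ℝ (Euc n) := Submodule.finrank_add_finrank_orthogonal _
  exact Submodule.eq_of_le_of_finrank_eq hle (by omega)

/-- In `O(n)` with the order induced by reflection length (where `ℓ(A) = dim M(A)`),
if `α ≤ β` then `M(α) ⊆ M(β)` and `F(β) ⊆ F(α)`. -/
theorem movedSpace_mono_of_le (n : ℕ) (α β : Euc n ≃ₗᵢ[ℝ] Euc n)
    (h : Module.finrank ℝ (movedSpace β) =
      Module.finrank ℝ (movedSpace α) + Module.finrank ℝ (movedSpace (α⁻¹ * β))) :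
    movedSpace α ≤ movedSpace β ∧ fixedSpace β ≤ fixedSpace α := by
  set γ := α⁻¹ * β with hγ
  have hsub : movedSpace β ≤ movedSpace α ⊔ movedSpace γ := by
    rintro _ ⟨x, rfl⟩
    have hαγ : α (γ x) = β x := by
      simp [hγ, LinearIsometryEquiv.coe_mul, Function.comp]
    have key : (β x : Euc n) - x = (α (γ x) - γ x) + (γ x - x) := by
      rw [hαγ]; abel
    simp only [LinearMap.sub_apply, LinearMap.id_apply]
    show (β x : Euc n) - x ∈ _
    rw [key]
    exact Submodule.add_mem _
      (Submodule.mem_sup_left ⟨γ x, rfl⟩)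
      (Submodule.mem_sup_right ⟨x, rfl⟩)
  have hdim : Module.finrank ℝ ↥(movedSpace α ⊔ movedSpace γ)
      ≤ Module.finrank ℝ (movedSpace β) := by
    rw [h]
    have := Submodule.finrank_sup_add_finrank_inf_eq (movedSpace α) (movedSpace γ)
    omega
  have heq : movedSpace β = movedSpace α ⊔ movedSpace γ :=
    Submodule.eq_of_le_of_finrank_le hsub hdim
  have hMle : movedSpace α ≤ movedSpace β := by
    rw [heq]; exact le_sup_left
  refine ⟨hMle, ?_⟩
  rw [fixedSpace_eq_orthogonal, fixedSpace_eq_orthogonal]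
  exact Submodule.orthogonal_le hMle
end
end

section
/- With μᵢ and ρᵢ as in Steinberg's construction for a Coxeter element γ of order h in a rank n finite real reflection group, one has μᵢ·ρⱼ = -μ_{j+n}·ρᵢ for all indices i, j (taken modulo nh). -/
noncomputable section
open scoped RealInnerProductSpace

/-- With `μᵢ` and `ρᵢ` as in Steinberg's construction for a Coxeter element `γ`
(so that `γ μᵢ = μᵢ - 2ρᵢ` and `μ_{i+n} = γ μᵢ`), one has
`μᵢ · ρⱼ = -μ_{j+n} · ρᵢ` for all `i, j`. -/
theorem steinberg_skew_symmetry (n : ℕ) (γ : Euc n ≃ₗᵢ[ℝ] Euc n)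
    (ρ μ : ℕ → Euc n)
    (h1 : ∀ i, γ (μ i) = μ i - (2 : ℝ) • ρ i)
    (h2 : ∀ i, μ (i + n) = γ (μ i)) :
    ∀ i j, ⟪μ i, ρ j⟫ = -⟪μ (j + n), ρ i⟫ := by
  intro i j
  have key : ⟪γ (μ i), γ (μ j)⟫ = ⟪μ i, μ j⟫ := γ.inner_map_map _ _
  rw [h1 i, h1 j] at key
  simp only [inner_sub_sub_self, inner_smul_left, inner_smul_right, inner_sub_left,
    inner_sub_right, real_inner_smul_left, real_inner_smul_right] at key
  rw [h2 j, h1 j, inner_sub_left, real_inner_smul_left,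
    real_inner_comm (ρ i) (μ j), real_inner_comm (ρ i) (ρ j)]
  simp only [starRingEnd_apply, star_trivial] at key
  linarith
end
end

section
/- Let δ₁,…,δ_k be unit vectors in ℝ^n with pairwise nonpositive dot products (δᵢ·δⱼ ≤ 0 for i ≠ j). Then for i < j, the vector R(δ_{i+1})⋯R(δ_{j-1})δⱼ is a non-negative linear combination of δ_{i+1},…,δⱼ, and consequently δᵢ · (R(δ_{i+1})⋯R(δ_{j-1})δⱼ) ≤ 0, hence ε_i · ε_j ≥ 0 where ε_m = R(δ₁)⋯R(δ_{m-1})δ_m. -/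
noncomputable section
open scoped RealInnerProductSpace

/-!
Reflecting a nonnegative combination `x` of vectors in a unit direction `δₘ` that makes obtuse
angles with all of them only adds the nonnegative multiple `-2⟪δₘ, x⟫ δₘ`. Applying
`R(δ_{j-1}), …, R(δ_{i+1})` to `δⱼ` one at a time therefore stays in the cone spanned by
`δ_{i+1}, …, δⱼ`, on which `⟪δᵢ, ·⟫` is nonpositive. Finally `R(δ₀)⋯R(δ_{i-1})` is an isometry
and `R(δᵢ)` is self-adjoint with `R(δᵢ) δᵢ = -δᵢ`, so `εᵢ · εⱼ = -⟪δᵢ, R(δ_{i+1})⋯R(δ_{j-1}) δⱼ⟫`.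
-/

namespace ObtuseReflections

variable {E : Type*} [NormedAddCommGroup E] [InnerProductSpace ℝ E]

theorem reflection_orthogonal_singleton_apply {v : E} (hv : ‖v‖ = 1) (x : E) :
    Submodule.reflection (ℝ ∙ v)ᗮ x = x - (2 * ⟪v, x⟫) • v := by
  rw [Submodule.reflection_orthogonal_apply, Submodule.reflection_singleton_apply, hv]
  module

theorem inner_reflection_orthogonal_singleton_right (v x : E) :
    ⟪v, Submodule.reflection (ℝ ∙ v)ᗮ x⟫ = -⟪v, x⟫ := by
  rw [← (Submodule.reflection (ℝ ∙ v)ᗮ).inner_map_map, Submodule.reflection_reflection,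
    Submodule.reflection_orthogonalComplement_singleton_eq_neg, inner_neg_left]

def reflProd (δ : ℕ → E) (s : List ℕ) : E ≃ₗᵢ[ℝ] E :=
  (s.map fun m => Submodule.reflection (ℝ ∙ δ m)ᗮ).prod

theorem reflProd_cons (δ : ℕ → E) (m : ℕ) (s : List ℕ) (x : E) :
    reflProd δ (m :: s) x = Submodule.reflection (ℝ ∙ δ m)ᗮ (reflProd δ s x) := by
  simp [reflProd]

theorem reflProd_append (δ : ℕ → E) (s t : List ℕ) (x : E) :
    reflProd δ (s ++ t) x = reflProd δ s (reflProd δ t x) := by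
  simp [reflProd]

def IsNonnegComb (δ : ℕ → E) (s : Finset ℕ) (x : E) : Prop :=
  ∃ c : ℕ → ℝ, (∀ l, 0 ≤ c l) ∧ x = ∑ l ∈ s, c l • δ l

namespace IsNonnegComb

variable {δ : ℕ → E} {s : Finset ℕ} {x : E}

theorem self (l : ℕ) : IsNonnegComb δ {l} (δ l) :=
  ⟨fun _ => 1, fun _ => zero_le_one, by simp⟩

theorem inner_nonpos (hx : IsNonnegComb δ s x) {v : E} (hv : ∀ l ∈ s, ⟪v, δ l⟫ ≤ 0) :
    ⟪v, x⟫ ≤ 0 := by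
  obtain ⟨c, hc, rfl⟩ := hx
  rw [inner_sum]
  exact Finset.sum_nonpos fun l hl => by
    rw [real_inner_smul_right]
    exact mul_nonpos_of_nonneg_of_nonpos (hc l) (hv l hl)

theorem mono (hx : IsNonnegComb δ s x) {t : Finset ℕ} (hst : s ⊆ t) : IsNonnegComb δ t x := by
  classical
  obtain ⟨c, hc, rfl⟩ := hx
  refine ⟨fun l => if l ∈ s then c l else 0, fun l => ite_nonneg (hc l) le_rfl, ?_⟩
  simp only [ite_smul, zero_smul, Finset.sum_ite_mem, Finset.inter_eq_right.2 hst]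

theorem add_smul_self (hx : IsNonnegComb δ s x) {m : ℕ} (hm : m ∈ s) {a : ℝ} (ha : 0 ≤ a) :
    IsNonnegComb δ s (x + a • δ m) := by
  classical
  obtain ⟨c, hc, rfl⟩ := hx
  have hsingle : (0 : ℕ → ℝ) ≤ Pi.single m a := Pi.single_nonneg.2 ha
  refine ⟨c + Pi.single m a, fun l => add_nonneg (hc l) (hsingle l), ?_⟩
  simp [add_smul, Finset.sum_add_distrib, Pi.single_apply, ite_smul, hm]

theorem reflection_insert (hx : IsNonnegComb δ s x) {m : ℕ} (hm : ‖δ m‖ = 1)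
    (hobtuse : ∀ l ∈ s, ⟪δ m, δ l⟫ ≤ 0) :
    IsNonnegComb δ (insert m s) (Submodule.reflection (ℝ ∙ δ m)ᗮ x) := by
  rw [reflection_orthogonal_singleton_apply hm, sub_eq_add_neg, ← neg_smul]
  exact (hx.mono (Finset.subset_insert m s)).add_smul_self (Finset.mem_insert_self m s)
    (by linarith [hx.inner_nonpos hobtuse])

end IsNonnegComb

theorem isNonnegComb_reflProd_range' {δ : ℕ → E} (a d : ℕ)
    (hunit : ∀ m, a ≤ m → m < a + d → ‖δ m‖ = 1)
    (hobtuse : ∀ m l, a ≤ m → m < l → l ≤ a + d → ⟪δ m, δ l⟫ ≤ 0) :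
    IsNonnegComb δ (Finset.Icc a (a + d)) (reflProd δ (List.range' a d) (δ (a + d))) := by
  induction d generalizing a with
  | zero => simpa [reflProd] using IsNonnegComb.self (δ := δ) a
  | succ d ih =>
    have hrec := ih (a + 1) (fun m h₁ h₂ => hunit m (by omega) (by omega))
      (fun m l h₁ h₂ h₃ => hobtuse m l (by omega) h₂ (by omega))
    rw [List.range'_succ, reflProd_cons, ← Finset.insert_Icc_add_one_left_eq_Icc (by omega)]
    rw [show a + 1 + d = a + (d + 1) by omega] at hrec
    exact hrec.reflection_insert (hunit a le_rfl (by omega)) fun l hl => by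
      rw [Finset.mem_Icc] at hl
      exact hobtuse a l le_rfl (by omega) (by omega)

theorem inner_reflProd_range_eq_neg_inner (δ : ℕ → E) (i d : ℕ) (x : E) :
    ⟪reflProd δ (List.range i) (δ i), reflProd δ (List.range (i + 1 + d)) x⟫ =
      -⟪δ i, reflProd δ (List.range' (i + 1) d) x⟫ := by
  rw [show i + 1 + d = i + (d + 1) by omega, List.range_eq_range', List.range_eq_range',
    ← List.range'_append_1, zero_add, List.range'_succ, reflProd_append,
    LinearIsometryEquiv.inner_map_map, reflProd_cons, inner_reflection_orthogonal_singleton_right]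

end ObtuseReflections

open ObtuseReflections

/-- For unit vectors `δ₀,…,δ_{k-1}` with pairwise nonpositive inner products and
`i < j < k`: the vector `R(δ_{i+1})⋯R(δ_{j-1}) δⱼ` is a non-negative linear
combination of `δ_{i+1},…,δⱼ`; consequently `δᵢ · (R(δ_{i+1})⋯R(δ_{j-1}) δⱼ) ≤ 0`
and `εᵢ · εⱼ ≥ 0`, where `ε_m = R(δ₀)⋯R(δ_{m-1}) δ_m`. -/
theorem eps_inner_nonneg (n k : ℕ) (δ : ℕ → Euc n)
    (hunit : ∀ i < k, ‖δ i‖ = 1)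
    (hobtuse : ∀ i < k, ∀ j < k, i ≠ j → ⟪δ i, δ j⟫ ≤ 0)
    (i j : ℕ) (hij : i < j) (hj : j < k) :
    (∃ c : ℕ → ℝ, (∀ l, 0 ≤ c l) ∧
      ((List.range' (i + 1) (j - (i + 1))).map fun m => Submodule.reflection (ℝ ∙ (δ m))ᗮ).prod (δ j) =
        ∑ l ∈ Finset.Icc (i + 1) j, c l • δ l) ∧
    ⟪δ i, ((List.range' (i + 1) (j - (i + 1))).map fun m => Submodule.reflection (ℝ ∙ (δ m))ᗮ).prod (δ j)⟫ ≤ 0 ∧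
    0 ≤ ⟪((List.range i).map fun m => Submodule.reflection (ℝ ∙ (δ m))ᗮ).prod (δ i),
        ((List.range j).map fun m => Submodule.reflection (ℝ ∙ (δ m))ᗮ).prod (δ j)⟫ := by
  obtain ⟨d, rfl⟩ : ∃ d, j = i + 1 + d := ⟨j - (i + 1), by omega⟩
  rw [Nat.add_sub_cancel_left]
  have hcomb := isNonnegComb_reflProd_range' (δ := δ) (i + 1) d
    (fun m _ hm => hunit m (by omega))
    (fun m l _ hml hl => hobtuse m (by omega) l (by omega) (by omega))
  have hinner : ⟪δ i, reflProd δ (List.range' (i + 1) d) (δ (i + 1 + d))⟫ ≤ 0 :=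
    hcomb.inner_nonpos fun l hl => by
      rw [Finset.mem_Icc] at hl
      exact hobtuse i (by omega) l (by omega) (by omega)
  refine ⟨hcomb, hinner, ?_⟩
  have heps := inner_reflProd_range_eq_neg_inner δ i d (δ (i + 1 + d))
  exact (neg_nonneg.2 hinner).trans_eq heps.symm
end
end
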